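/- arXiv:2401.04594 — 6 statements merged into one kernel-verified Lean document; each statement's English description precedes it below -/
import Mathlib

section
/- Soundness of the Outcome Logic proof system: for every program C and all outcome assertions φ, ψ, if the triple ⟨φ⟩C⟨ψ⟩ is derivable in the Outcome Logic proof system (Ω ⊢ ⟨φ⟩C⟨ψ⟩), then it is semantically valid (⊨ ⟨φ⟩C⟨ψ⟩). -/
open scoped Classical

universe u v

/-- A semiring that is simultaneously a complete lattice with bottom `0`, whose order
coincides with the natural (additive) order, and in which addition and multiplication
are Scott-continuous. -/
class OLSemiring (U : Type u) extends Semiring U, CompleteLattice U where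
  bot_eq_zero : (⊥ : U) = 0
  le_iff_exists_add : ∀ a b : U, a ≤ b ↔ ∃ c, a + c = b
  add_scott : ∀ (D : Set U), D.Nonempty → DirectedOn (· ≤ ·) D → ∀ y : U,
    sSup ((fun x => x + y) '' D) = sSup D + y
  mul_scott_right : ∀ (D : Set U), D.Nonempty → DirectedOn (· ≤ ·) D → ∀ y : U,
    sSup ((fun x => x * y) '' D) = sSup D * y
  mul_scott_left : ∀ (D : Set U), D.Nonempty → DirectedOn (· ≤ ·) D → ∀ y : U,
    sSup ((fun x => y * x) '' D) = y * sSup D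

variable {U : Type u} [OLSemiring U]

/-- Infinite sum: supremum over finite subfamilies of finite sums. -/
noncomputable def wsum {I : Type v} (f : I → U) : U :=
  ⨆ J : Finset I, ∑ i ∈ J, f i

/-- The unit of the weighting monad. -/
noncomputable def eta {X : Type u} (x : X) : X → U :=
  fun y => if y = x then 1 else 0

/-- Kleisli extension: `kext f m y = ∑_{x ∈ supp m} m x * f x y`. -/
noncomputable def kext {X Y : Type u} (f : X → Y → U) (m : X → U) : Y → U :=
  fun y => wsum (fun x : Function.support m => m x.1 * f x.1 y)

/-- Syntax of tests over primitive tests indexed by `TI`. -/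
inductive TestExpr (TI : Type u) : Type u where
  | prim (t : TI)
  | tt
  | ff
  | and (b₁ b₂ : TestExpr TI)
  | or (b₁ b₂ : TestExpr TI)
  | not (b : TestExpr TI)

/-- The set of states at which a test is true. -/
def testSet {St TI : Type u} (tsem : TI → Set St) : TestExpr TI → Set St
  | .prim t => tsem t
  | .tt => Set.univ
  | .ff => ∅
  | .and b₁ b₂ => testSet tsem b₁ ∩ testSet tsem b₂
  | .or b₁ b₂ => testSet tsem b₁ ∪ testSet tsem b₂
  | .not b => (testSet tsem b)ᶜ

/-- Expressions: a test or a weight. -/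
inductive Expr (U : Type u) (TI : Type u) : Type u where
  | test (b : TestExpr TI)
  | wt (u : U)

/-- Evaluation of expressions into weights. -/
noncomputable def eeval {St TI : Type u} (tsem : TI → Set St) : Expr U TI → St → U
  | .test b => fun σ => if σ ∈ testSet tsem b then 1 else 0
  | .wt u => fun _ => u

/-- Programs. -/
inductive Prog (U St TI Act : Type u) : Type u where
  | skip
  | seq (C₁ C₂ : Prog U St TI Act)
  | choice (C₁ C₂ : Prog U St TI Act)
  | assume (e : Expr U TI)
  | iter (C : Prog U St TI Act) (e e' : Expr U TI)
  | act (a : Act)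

/-- The characteristic function of iteration. -/
noncomputable def Phi {St : Type u} (w w' : St → U) (g : St → St → U)
    (f : St → St → U) : St → St → U :=
  fun σ τ => w σ * kext f (g σ) τ + w' σ * eta σ τ

/-- Denotational semantics of programs. -/
noncomputable def sem {St TI Act : Type u} (tsem : TI → Set St)
    (asem : Act → St → St → U) : Prog U St TI Act → St → St → U
  | .skip => fun σ => eta σ
  | .seq C₁ C₂ => fun σ => kext (sem tsem asem C₂) (sem tsem asem C₁ σ)
  | .choice C₁ C₂ => fun σ τ => sem tsem asem C₁ σ τ + sem tsem asem C₂ σ τ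
  | .assume e => fun σ τ => eeval tsem e σ * eta σ τ
  | .iter C e e' =>
      ⨆ n : ℕ, (Phi (eeval tsem e) (eeval tsem e') (sem tsem asem C))^[n] (fun _ _ => 0)
  | .act a => asem a

/-- Outcome assertions. -/
abbrev OA (U : Type u) (St : Type u) := Set (St → U)

/-- Binary outcome conjunction. -/
def oplus {St : Type u} (φ ψ : OA U St) : OA U St :=
  { m | ∃ m₁ ∈ φ, ∃ m₂ ∈ ψ, m = fun σ => m₁ σ + m₂ σ }

/-- Indexed outcome conjunction. -/
noncomputable def bigOplus {St T : Type u} (φ : T → OA U St) : OA U St :=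
  { m | ∃ f : T → St → U, (∀ t, f t ∈ φ t) ∧ m = fun σ => wsum (fun t => f t σ) }

/-- Right scaling of an assertion by a weight. -/
def odotR {St : Type u} (φ : OA U St) (u : U) : OA U St :=
  { m' | ∃ m ∈ φ, m' = fun σ => m σ * u }

/-- Left scaling of an assertion by a weight. -/
def odotL {St : Type u} (u : U) (φ : OA U St) : OA U St :=
  { m' | ∃ m ∈ φ, m' = fun σ => u * m σ }

/-- `φ ⊨ e = u` : the expression `e` evaluates to `u` on the support of every `m ∈ φ`. -/
def entailsEq {St TI : Type u} (tsem : TI → Set St) (φ : OA U St)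
    (e : Expr U TI) (u : U) : Prop :=
  ∀ m ∈ φ, ∀ σ, m σ ≠ 0 → eeval tsem e σ = u

/-- Semantic validity of an outcome triple. -/
def valid {St TI Act : Type u} (tsem : TI → Set St) (asem : Act → St → St → U)
    (φ : OA U St) (C : Prog U St TI Act) (ψ : OA U St) : Prop :=
  ∀ m ∈ φ, kext (sem tsem asem C) m ∈ ψ

/-- The family `ψ` of assertions converges to `ψlim`. -/
def convergesTo {St : Type u} (ψ : ℕ → OA U St) (ψlim : OA U St) : Prop :=
  ∀ ms : ℕ → St → U, (∀ n, ms n ∈ ψ n) → (fun σ => wsum (fun n => ms n σ)) ∈ ψlim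

/-- The Outcome Logic proof system (with oracle axioms for valid atomic triples). -/
inductive Deriv {St TI Act : Type u} (tsem : TI → Set St) (asem : Act → St → St → U) :
    OA U St → Prog U St TI Act → OA U St → Prop where
  | atom {φ ψ} (a : Act) :
      valid tsem asem φ (.act a) ψ → Deriv tsem asem φ (.act a) ψ
  | skip (φ) : Deriv tsem asem φ .skip φ
  | seq {φ ϑ ψ C₁ C₂} :
      Deriv tsem asem φ C₁ ϑ → Deriv tsem asem ϑ C₂ ψ →
      Deriv tsem asem φ (.seq C₁ C₂) ψ
  | plus {φ ψ₁ ψ₂ C₁ C₂} :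
      Deriv tsem asem φ C₁ ψ₁ → Deriv tsem asem φ C₂ ψ₂ →
      Deriv tsem asem φ (.choice C₁ C₂) (oplus ψ₁ ψ₂)
  | assume {φ e u} :
      entailsEq tsem φ e u → Deriv tsem asem φ (.assume e) (odotR φ u)
  | iter {C e e'} (φn ψn : ℕ → OA U St) (ψlim : OA U St) :
      convergesTo ψn ψlim →
      (∀ n, Deriv tsem asem (φn n) (.seq (.assume e) C) (φn (n + 1))) →
      (∀ n, Deriv tsem asem (φn n) (.assume e') (ψn n)) →
      Deriv tsem asem (φn 0) (.iter C e e') ψlim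
  | false (C φ) : Deriv tsem asem ∅ C φ
  | true (C φ) : Deriv tsem asem φ C Set.univ
  | scale {φ ψ C} (u : U) :
      Deriv tsem asem φ C ψ → Deriv tsem asem (odotL u φ) C (odotL u ψ)
  | disj {φ₁ φ₂ ψ₁ ψ₂ C} :
      Deriv tsem asem φ₁ C ψ₁ → Deriv tsem asem φ₂ C ψ₂ →
      Deriv tsem asem (φ₁ ∪ φ₂) C (ψ₁ ∪ ψ₂)
  | conj {φ₁ φ₂ ψ₁ ψ₂ C} :
      Deriv tsem asem φ₁ C ψ₁ → Deriv tsem asem φ₂ C ψ₂ →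
      Deriv tsem asem (φ₁ ∩ φ₂) C (ψ₁ ∩ ψ₂)
  | choice {T : Type u} {C} (φ φ' : T → OA U St) :
      (∀ t, Deriv tsem asem (φ t) C (φ' t)) →
      Deriv tsem asem (bigOplus φ) C (bigOplus φ')
  | exists_ {T : Type u} {C} (φ φ' : T → OA U St) :
      (∀ t, Deriv tsem asem (φ t) C (φ' t)) →
      Deriv tsem asem (⋃ t, φ t) C (⋃ t, φ' t)
  | conseq {φ φ' ψ ψ' C} :
      φ' ⊆ φ → Deriv tsem asem φ C ψ → ψ ⊆ ψ' →
      Deriv tsem asem φ' C ψ'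

/-! Soundness is proved by induction on the derivation. Every rule except `iter` reduces to an
algebraic law of the Kleisli extension `kext` (the monad laws, linearity in the weighting and
commutation with infinite sums); these follow from Scott continuity, which moves directed suprema
through the finite sums defining `wsum`.

For `iter`, unrolling the fixed-point iterates of `Phi` shows that running the loop on `m` yields
`∑ₖ ⟦assume e'⟧†(⟦assume e; C⟧†ᵏ m)`. The `k`-th summand lies in `ψ k`, because
`⟦assume e; C⟧†ᵏ m ∈ φ k`, so convergence of `ψ` to `ψlim` concludes. -/

namespace OLSemiring

instance : CanonicallyOrderedAdd U where
  exists_add_of_le {a b} h := let ⟨c, hc⟩ := (le_iff_exists_add a b).1 h; ⟨c, hc.symm⟩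
  le_self_add a b := (le_iff_exists_add a (a + b)).2 ⟨b, rfl⟩
  le_add_self a b := (le_iff_exists_add a (b + a)).2 ⟨b, add_comm a b⟩

instance : IsOrderedAddMonoid U := CanonicallyOrderedAdd.toIsOrderedAddMonoid

variable {κ : Type*} [Nonempty κ] [Preorder κ] [IsDirected κ (· ≤ ·)] {F G : κ → U}

theorem iSup_add_of_monotone (hF : Monotone F) (y : U) : (⨆ k, F k) + y = ⨆ k, F k + y := by
  have h := add_scott _ (Set.range_nonempty F) (directedOn_range.2 hF.directed_le) y
  rwa [← Set.range_comp, sSup_range, sSup_range, eq_comm] at h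

theorem iSup_mul_of_monotone (hF : Monotone F) (y : U) : (⨆ k, F k) * y = ⨆ k, F k * y := by
  have h := mul_scott_right _ (Set.range_nonempty F) (directedOn_range.2 hF.directed_le) y
  rwa [← Set.range_comp, sSup_range, sSup_range, eq_comm] at h

theorem mul_iSup_of_monotone (hF : Monotone F) (y : U) : y * (⨆ k, F k) = ⨆ k, y * F k := by
  have h := mul_scott_left _ (Set.range_nonempty F) (directedOn_range.2 hF.directed_le) y
  rwa [← Set.range_comp, sSup_range, sSup_range, eq_comm] at h

theorem iSup_add_iSup_of_monotone (hF : Monotone F) (hG : Monotone G) :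
    (⨆ k, F k) + (⨆ k, G k) = ⨆ k, F k + G k := by
  refine le_antisymm ?_ (iSup_le fun k => add_le_add (le_iSup F k) (le_iSup G k))
  rw [iSup_add_of_monotone hF]
  refine iSup_le fun i => ?_
  rw [add_comm, iSup_add_of_monotone hG]
  refine iSup_le fun j => ?_
  obtain ⟨k, hik, hjk⟩ := directed_of (· ≤ ·) i j
  exact le_iSup_of_le k (by rw [add_comm]; exact add_le_add (hF hik) (hG hjk))

theorem sum_iSup_of_monotone {I : Type*} (s : Finset I) {f : I → κ → U}
    (hf : ∀ i, Monotone (f i)) : ∑ i ∈ s, ⨆ k, f i k = ⨆ k, ∑ i ∈ s, f i k := by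
  classical
  induction s using Finset.induction_on with
  | empty => simp
  | insert i s hi ih =>
    simp only [Finset.sum_insert hi, ih]
    exact iSup_add_iSup_of_monotone (hf i) fun _ _ hkl => Finset.sum_le_sum fun j _ => hf j hkl

end OLSemiring

section wsum

open OLSemiring

variable {I J : Type*}

theorem sum_le_wsum (f : I → U) (s : Finset I) : ∑ i ∈ s, f i ≤ wsum f :=
  le_iSup (fun s : Finset I => ∑ i ∈ s, f i) s

theorem wsum_le {f : I → U} {u : U} (h : ∀ s : Finset I, ∑ i ∈ s, f i ≤ u) : wsum f ≤ u :=
  iSup_le h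

theorem le_wsum (f : I → U) (i : I) : f i ≤ wsum f := by
  simpa using sum_le_wsum f {i}

theorem wsum_mono {f g : I → U} (h : f ≤ g) : wsum f ≤ wsum g :=
  wsum_le fun s => (Finset.sum_le_sum fun i _ => h i).trans (sum_le_wsum g s)

theorem monotone_finsetSum (f : I → U) : Monotone fun s : Finset I => ∑ i ∈ s, f i :=
  fun _ _ => Finset.sum_le_sum_of_subset

theorem wsum_zero : wsum (fun _ : I => (0 : U)) = 0 :=
  le_antisymm (wsum_le fun _ => by simp) zero_le

theorem wsum_add (f g : I → U) : wsum (fun i => f i + g i) = wsum f + wsum g := by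
  simp only [wsum, Finset.sum_add_distrib,
    iSup_add_iSup_of_monotone (monotone_finsetSum f) (monotone_finsetSum g)]

theorem wsum_mul (f : I → U) (y : U) : wsum f * y = wsum fun i => f i * y := by
  simp only [wsum, Finset.sum_mul, iSup_mul_of_monotone (monotone_finsetSum f)]

theorem mul_wsum (y : U) (f : I → U) : y * wsum f = wsum fun i => y * f i := by
  simp only [wsum, Finset.mul_sum, mul_iSup_of_monotone (monotone_finsetSum f)]

theorem wsum_iSup_of_monotone {κ : Type*} [Nonempty κ] [Preorder κ] [IsDirected κ (· ≤ ·)]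
    {f : I → κ → U} (hf : ∀ i, Monotone (f i)) :
    wsum (fun i => ⨆ k, f i k) = ⨆ k, wsum fun i => f i k := by
  refine le_antisymm (wsum_le fun s => ?_) (iSup_le fun k => wsum_mono fun i => le_iSup (f i) k)
  rw [sum_iSup_of_monotone s hf]
  exact iSup_mono fun k => sum_le_wsum _ s

theorem wsum_eq_single {f : I → U} (a : I) (h : ∀ i, i ≠ a → f i = 0) : wsum f = f a := by
  classical
  refine le_antisymm (wsum_le fun s => ?_) (le_wsum f a)
  by_cases ha : a ∈ s
  · rw [Finset.sum_eq_single_of_mem a ha fun b _ hb => h b hb]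
  · rw [Finset.sum_eq_zero fun b hb => h b (ne_of_mem_of_not_mem hb ha)]
    exact zero_le

theorem wsum_comp_le {f : J → U} {e : I → J} (he : e.Injective) : wsum (f ∘ e) ≤ wsum f :=
  wsum_le fun s => by
    simpa [Finset.sum_map] using sum_le_wsum f (s.map ⟨e, he⟩)

theorem wsum_comp_equiv (e : I ≃ J) (f : J → U) : wsum (f ∘ e) = wsum f := by
  refine le_antisymm (wsum_comp_le e.injective) ?_
  simpa [Function.comp_def] using wsum_comp_le (f := f ∘ e) e.symm.injective

theorem wsum_subtype_eq_of_support_subset {p : I → Prop} {f : I → U}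
    (h : ∀ i, ¬ p i → f i = 0) :
    wsum (fun i : Subtype p => f i) = wsum f := by
  classical
  refine le_antisymm (wsum_comp_le Subtype.val_injective) (wsum_le fun s => ?_)
  rw [← Finset.sum_filter_of_ne fun i _ hi => not_not.1 (mt (h i) hi),
    ← Finset.sum_subtype_eq_sum_filter]
  exact sum_le_wsum _ _

theorem wsum_prod (g : I → J → U) :
    wsum (fun p : I × J => g p.1 p.2) = wsum fun i => wsum (g i) := by
  refine le_antisymm (wsum_le fun s => ?_) (wsum_le fun s => ?_)
  · calc ∑ p ∈ s, g p.1 p.2 ≤ ∑ p ∈ s.image Prod.fst ×ˢ s.image Prod.snd, g p.1 p.2 :=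
          Finset.sum_le_sum_of_subset fun p hp =>
            Finset.mem_product.2 ⟨Finset.mem_image_of_mem _ hp, Finset.mem_image_of_mem _ hp⟩
      _ = ∑ i ∈ s.image Prod.fst, ∑ j ∈ s.image Prod.snd, g i j := Finset.sum_product' _ _ _
      _ ≤ ∑ i ∈ s.image Prod.fst, wsum (g i) := Finset.sum_le_sum fun i _ => sum_le_wsum _ _
      _ ≤ wsum fun i => wsum (g i) := sum_le_wsum _ _
  · simp only [wsum]
    rw [sum_iSup_of_monotone s fun i => monotone_finsetSum (g i)]
    exact iSup_le fun t => (Finset.sum_product' s t g).symm.trans_le (sum_le_wsum _ _)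

theorem wsum_comm (g : I → J → U) :
    (wsum fun i => wsum (g i)) = wsum fun j => wsum fun i => g i j := by
  rw [← wsum_prod, ← wsum_prod, ← wsum_comp_equiv (Equiv.prodComm J I)]
  rfl

theorem wsum_nat (f : ℕ → U) : wsum f = ⨆ n, ∑ k ∈ Finset.range n, f k := by
  refine le_antisymm (wsum_le fun s => ?_) (iSup_le fun n => sum_le_wsum f _)
  obtain ⟨n, hn⟩ := s.exists_nat_subset_range
  exact (Finset.sum_le_sum_of_subset hn).trans (le_iSup (fun n => ∑ k ∈ Finset.range n, f k) n)

end wsum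

section kext

open OLSemiring

variable {X Y Z : Type u}

theorem kext_apply (f : X → Y → U) (m : X → U) (y : Y) :
    kext f m y = wsum fun x => m x * f x y :=
  wsum_subtype_eq_of_support_subset (f := fun x => m x * f x y) fun x hx => by
    rw [Function.notMem_support.1 hx, zero_mul]

theorem kext_mono {f f' : X → Y → U} (h : f ≤ f') (m : X → U) : kext f m ≤ kext f' m :=
  fun y => by
    simp only [kext_apply]
    exact wsum_mono fun x => mul_le_mul_right (h x y) _

theorem kext_zero (m : X → U) : kext (fun _ _ => (0 : U)) m = (fun _ : Y => 0) := by
  funext y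
  simp only [kext_apply, mul_zero, wsum_zero]

theorem kext_eta (m : X → U) : kext eta m = m := by
  funext y
  rw [kext_apply, wsum_eq_single y fun x hx => by simp [eta, Ne.symm hx], eta, if_pos rfl, mul_one]

theorem kext_mul_eta (f : X → Y → U) (c : U) (x : X) :
    kext f (fun x' => c * eta x x') = fun y => c * f x y := by
  funext y
  rw [kext_apply, wsum_eq_single x fun x' hx => by simp [eta, hx], eta, if_pos rfl, mul_one]

theorem kext_eta_mul (w : X → U) (m : X → U) :
    kext (fun x x' => w x * eta x x') m = fun x => m x * w x := by
  funext x
  rw [kext_apply, wsum_eq_single x fun x' hx => by simp [eta, Ne.symm hx], eta, if_pos rfl,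
    mul_one]

theorem kext_kext (g : Y → Z → U) (f : X → Y → U) (m : X → U) :
    kext g (kext f m) = kext (fun x => kext g (f x)) m := by
  funext z
  simp only [kext_apply, wsum_mul, mul_wsum, mul_assoc]
  exact wsum_comm _

theorem kext_add (f g : X → Y → U) (m : X → U) :
    kext (fun x y => f x y + g x y) m = fun y => kext f m y + kext g m y := by
  funext y
  simp only [kext_apply, mul_add, wsum_add]

theorem kext_const_mul (f : X → Y → U) (c : U) (m : X → U) :
    kext f (fun x => c * m x) = fun y => c * kext f m y := by
  funext y
  simp only [kext_apply, mul_wsum, mul_assoc]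

theorem kext_wsum {T : Type*} (f : X → Y → U) (m : T → X → U) :
    kext f (fun x => wsum fun t => m t x) = fun y => wsum fun t => kext f (m t) y := by
  funext y
  simp only [kext_apply, wsum_mul]
  exact wsum_comm _

theorem kext_iSup {F : ℕ → X → Y → U} (hF : Monotone F) (m : X → U) :
    kext (⨆ n, F n) m = fun y => ⨆ n, kext (F n) m y := by
  funext y
  have hmul : ∀ x, m x * (⨆ n, F n) x y = ⨆ n, m x * F n x y := fun x => by
    rw [iSup_apply, iSup_apply, mul_iSup_of_monotone fun _ _ hkl => hF hkl x y]
  simp only [kext_apply, hmul]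
  exact wsum_iSup_of_monotone fun x _ _ hkl => mul_le_mul_right (hF hkl x y) _

end kext

section iteration

variable {St : Type u} (w w' : St → U) (g : St → St → U)

theorem kext_Phi (f : St → St → U) (m : St → U) :
    kext (Phi w w' g f) m = fun τ =>
      kext f (kext (fun σ τ => w σ * g σ τ) m) τ + kext (fun σ τ => w' σ * eta σ τ) m τ := by
  unfold Phi
  rw [kext_add, kext_kext]
  simp only [kext_const_mul]

theorem monotone_iterate_Phi : Monotone fun n => (Phi w w' g)^[n] fun _ _ => 0 :=
  Monotone.monotone_iterate_of_le_map
    (fun _ _ h σ τ => add_le_add_left (mul_le_mul_right (kext_mono h (g σ) τ) _) _)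
    (fun _ _ => zero_le)

theorem kext_iterate_Phi (n : ℕ) (m : St → U) :
    kext ((Phi w w' g)^[n] fun _ _ => 0) m = fun τ =>
      ∑ k ∈ Finset.range n,
        kext (fun σ τ => w' σ * eta σ τ) ((kext fun σ τ => w σ * g σ τ)^[k] m) τ := by
  induction n generalizing m with
  | zero => simp [kext_zero]
  | succ n ih =>
    funext τ
    rw [Function.iterate_succ_apply', kext_Phi, ih, Finset.sum_range_succ']
    simp only [Function.iterate_succ_apply, Function.iterate_zero_apply]

theorem kext_iSup_iterate_Phi (m : St → U) :
    kext (⨆ n, (Phi w w' g)^[n] fun _ _ => 0) m = fun τ =>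
      wsum fun k => kext (fun σ τ => w' σ * eta σ τ) ((kext fun σ τ => w σ * g σ τ)^[k] m) τ := by
  funext τ
  rw [kext_iSup (monotone_iterate_Phi w w' g), wsum_nat]
  simp only [kext_iterate_Phi]

end iteration

section soundness

variable {St TI Act : Type u} (tsem : TI → Set St) (asem : Act → St → St → U)

theorem sem_assume_seq (e : Expr U TI) (C : Prog U St TI Act) :
    sem tsem asem (.seq (.assume e) C) = fun σ τ => eeval tsem e σ * sem tsem asem C σ τ :=
  funext fun σ => kext_mul_eta _ _ σ

theorem kext_sem_iter (C : Prog U St TI Act) (e e' : Expr U TI) (m : St → U) :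
    kext (sem tsem asem (.iter C e e')) m = fun τ =>
      wsum fun k => kext (sem tsem asem (.assume e'))
        ((kext (sem tsem asem (.seq (.assume e) C)))^[k] m) τ := by
  rw [sem_assume_seq]
  exact kext_iSup_iterate_Phi _ _ _ m

theorem valid_skip (φ : OA U St) : valid tsem asem φ (.skip : Prog U St TI Act) φ :=
  fun m hm => (kext_eta m).symm ▸ hm

theorem valid_seq {φ ϑ ψ : OA U St} {C₁ C₂ : Prog U St TI Act}
    (h₁ : valid tsem asem φ C₁ ϑ) (h₂ : valid tsem asem ϑ C₂ ψ) :
    valid tsem asem φ (.seq C₁ C₂) ψ := fun m hm => by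
  simpa only [sem, kext_kext] using h₂ _ (h₁ m hm)

theorem valid_choice {φ ψ₁ ψ₂ : OA U St} {C₁ C₂ : Prog U St TI Act}
    (h₁ : valid tsem asem φ C₁ ψ₁) (h₂ : valid tsem asem φ C₂ ψ₂) :
    valid tsem asem φ (.choice C₁ C₂) (oplus ψ₁ ψ₂) := fun m hm =>
  ⟨_, h₁ m hm, _, h₂ m hm, by rw [sem, kext_add]⟩

theorem valid_assume {φ : OA U St} {e : Expr U TI} {u : U} (h : entailsEq tsem φ e u) :
    valid tsem asem φ (.assume e) (odotR φ u) := fun m hm => by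
  refine ⟨m, hm, ?_⟩
  rw [sem, kext_eta_mul]
  funext σ
  by_cases hσ : m σ = 0
  · rw [hσ, zero_mul, zero_mul]
  · rw [h m hm σ hσ]

theorem valid_iter {C : Prog U St TI Act} {e e' : Expr U TI} {φ ψ : ℕ → OA U St}
    {ψlim : OA U St} (hψ : convergesTo ψ ψlim)
    (hstep : ∀ n, valid tsem asem (φ n) (.seq (.assume e) C) (φ (n + 1)))
    (hexit : ∀ n, valid tsem asem (φ n) (.assume e') (ψ n)) :
    valid tsem asem (φ 0) (.iter C e e') ψlim := fun m hm => by
  have hunroll : ∀ k, (kext (sem tsem asem (.seq (.assume e) C)))^[k] m ∈ φ k := by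
    intro k
    induction k with
    | zero => exact hm
    | succ k ih => rw [Function.iterate_succ_apply']; exact hstep k _ ih
  rw [kext_sem_iter]
  exact hψ _ fun k => hexit k _ (hunroll k)

theorem valid_scale {φ ψ : OA U St} {C : Prog U St TI Act} (u : U) (h : valid tsem asem φ C ψ) :
    valid tsem asem (odotL u φ) C (odotL u ψ) := by
  rintro _ ⟨m, hm, rfl⟩
  exact ⟨_, h m hm, kext_const_mul _ u m⟩

theorem valid_bigOplus {T : Type u} {φ φ' : T → OA U St} {C : Prog U St TI Act}
    (h : ∀ t, valid tsem asem (φ t) C (φ' t)) :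
    valid tsem asem (bigOplus φ) C (bigOplus φ') := by
  rintro _ ⟨m, hm, rfl⟩
  exact ⟨_, fun t => h t (m t) (hm t), kext_wsum _ m⟩

end soundness

/-- **Soundness of the Outcome Logic proof system**: every triple derivable from the
oracle `Ω` of valid atomic triples is semantically valid. -/
theorem outcome_logic_soundness {U St TI Act : Type u} [OLSemiring U]
    (tsem : TI → Set St) (asem : Act → St → St → U)
    (C : Prog U St TI Act) (φ ψ : OA U St)
    (h : Deriv tsem asem φ C ψ) :
    valid tsem asem φ C ψ := by
  induction h with
  | atom _ h => exact h
  | skip φ => exact valid_skip tsem asem φ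
  | seq _ _ ih₁ ih₂ => exact valid_seq tsem asem ih₁ ih₂
  | plus _ _ ih₁ ih₂ => exact valid_choice tsem asem ih₁ ih₂
  | assume h => exact valid_assume tsem asem h
  | iter _ _ _ hψ _ _ ihstep ihexit => exact valid_iter tsem asem hψ ihstep ihexit
  | false => exact fun _ hm => hm.elim
  | true => exact fun _ _ => trivial
  | scale u _ ih => exact valid_scale tsem asem u ih
  | disj _ _ ih₁ ih₂ => exact fun m hm => hm.imp (ih₁ m) (ih₂ m)
  | conj _ _ ih₁ ih₂ => exact fun m hm => ⟨ih₁ m hm.1, ih₂ m hm.2⟩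
  | choice _ _ _ ih => exact valid_bigOplus tsem asem ih
  | exists_ _ _ _ ih =>
    exact fun m hm => Set.mem_iUnion.2 ((Set.mem_iUnion.1 hm).imp fun t ht => ih t m ht)
  | conseq hφ _ hψ ih => exact fun m hm => hψ (ih m (hφ hm))
end

section
/- Subsumption of Hoare Logic (nondeterministic instance): for every function f : Σ → Set Σ and all subsets P, Q ⊆ Σ, the Outcome Logic triple ⟨⌈P⌉⟩f⟨◻Q⟩ is valid — i.e. f†(S) ∈ ◻Q for every S ∈ ⌈P⌉ — if and only if P ⊆ { σ | f(σ) ⊆ Q } (the weakest-liberal-precondition / Dynamic Logic box semantics of the Hoare triple {P} f {Q}). -/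
/-- Kleisli extension in the powerset (nondeterministic) instance: `f†(S) = ⋃_{σ∈S} f σ`. -/
def kextP {St : Type*} (f : St → Set St) (S : Set St) : Set St :=
  ⋃ σ ∈ S, f σ

/-- `⌈P⌉` : the outcome assertion `{S | S nonempty and S ⊆ P}`. -/
def ceil {St : Type*} (P : Set St) : Set (Set St) :=
  { S | S.Nonempty ∧ S ⊆ P }

/-- `◻Q` : the outcome assertion `{S | S ⊆ Q}`. -/
def boxA {St : Type*} (Q : Set St) : Set (Set St) :=
  { S | S ⊆ Q }

/-- `◇Q` : the outcome assertion `{S | S ∩ Q nonempty}`. -/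
def diaA {St : Type*} (Q : Set St) : Set (Set St) :=
  { S | (S ∩ Q).Nonempty }

/-- Semantic validity of an outcome triple in the powerset instance. -/
def validP {St : Type*} (φ : Set (Set St)) (f : St → Set St) (ψ : Set (Set St)) : Prop :=
  ∀ S ∈ φ, kextP f S ∈ ψ

theorem kextP_singleton {St : Type*} (f : St → Set St) (σ : St) : kextP f {σ} = f σ :=
  Set.biUnion_singleton σ f

theorem kextP_subset_iff {St : Type*} (f : St → Set St) (S Q : Set St) :
    kextP f S ⊆ Q ↔ ∀ σ ∈ S, f σ ⊆ Q :=
  Set.iUnion₂_subset_iff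

/-- **Subsumption of Hoare Logic (nondeterministic instance)**:
`⊨ ⟨⌈P⌉⟩f⟨◻Q⟩` iff `P ⊆ {σ | f σ ⊆ Q}` (the Dynamic Logic box semantics). -/
theorem ol_subsumes_hoare {St : Type*} (f : St → Set St) (P Q : Set St) :
    validP (ceil P) f (boxA Q) ↔ P ⊆ { σ | f σ ⊆ Q } := by
  constructor
  · intro h σ hσ
    show f σ ⊆ Q
    rw [← kextP_singleton f σ]
    exact h {σ} ⟨Set.singleton_nonempty σ, Set.singleton_subset_iff.2 hσ⟩
  · rintro h S ⟨-, hSP⟩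
    exact (kextP_subset_iff f S Q).2 fun σ hσ => h (hSP hσ)
end

section
/- Soundness of the loop-invariant rule (nondeterministic instance): for every guard b ⊆ Σ, body f : Σ → Set Σ and invariant P ⊆ Σ, if f(σ) ⊆ P for every σ ∈ P ∩ b, then for every S ∈ ⌈P⌉ one has wh†(S) ∈ ◻(P ∩ bᶜ), i.e. the triple ⟨⌈P⌉⟩ while b do f ⟨◻(P ∧ ¬b)⟩ is valid. -/
open scoped Classical

def PhiW {St : Type*} (b : Set St) (f : St → Set St) (g : St → Set St) : St → Set St :=
  fun σ => if σ ∈ b then ⋃ τ ∈ f σ, g τ else {σ}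

theorem PhiW_mono {St : Type*} (b : Set St) (f : St → Set St) : Monotone (PhiW b f) := by
  intro g g' h σ
  by_cases hb : σ ∈ b
  · simp only [PhiW, if_pos hb]
    exact Set.iUnion₂_mono fun τ _ => h τ
  · simp [PhiW, hb]

/-- The denotation of `while b do f`: the least fixed point (pointwise `⊆` order)
of `Φ(g)(σ) = ⋃_{τ∈f σ} g τ` if `σ ∈ b`, else `{σ}`. -/
noncomputable def whileSem {St : Type*} (b : Set St) (f : St → Set St) : St → Set St :=
  OrderHom.lfp ⟨PhiW b f, PhiW_mono b f⟩

section

variable {St : Type*} (b : Set St) (f : St → Set St)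

theorem kextP_subset {S Q : Set St} (h : ∀ σ ∈ S, f σ ⊆ Q) : kextP f S ⊆ Q :=
  Set.iUnion₂_subset h

theorem whileSem_le_of_PhiW_le {g : St → Set St} (h : PhiW b f g ≤ g) : whileSem b f ≤ g :=
  OrderHom.lfp_le _ h

variable {b f}

def relOfPrePost (P Q : Set St) : St → Set St :=
  fun σ => {τ | σ ∈ P → τ ∈ Q}

theorem PhiW_relOfPrePost_le {P : Set St} (hinv : ∀ σ ∈ P ∩ b, f σ ⊆ P) :
    PhiW b f (relOfPrePost P (P ∩ bᶜ)) ≤ relOfPrePost P (P ∩ bᶜ) := by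
  intro σ
  by_cases hb : σ ∈ b
  · simp only [PhiW, if_pos hb]
    exact Set.iUnion₂_subset fun τ hτ x hx hσ => hx (hinv σ ⟨hσ, hb⟩ hτ)
  · simp only [PhiW, if_neg hb, Set.singleton_subset_iff]
    exact fun hσ => ⟨hσ, hb⟩

/-- Park induction: the partial-correctness specification `relOfPrePost P (P ∩ bᶜ)` is a
prefixed point of `PhiW b f`, hence lies above its least fixed point. -/
theorem whileSem_subset_of_invariant {P : Set St} (hinv : ∀ σ ∈ P ∩ b, f σ ⊆ P)
    {σ : St} (hσ : σ ∈ P) : whileSem b f σ ⊆ P ∩ bᶜ :=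
  fun _ hτ => whileSem_le_of_PhiW_le b f (PhiW_relOfPrePost_le hinv) σ hτ hσ

end

/-- **Soundness of the loop-invariant rule**: if `f σ ⊆ P` for every `σ ∈ P ∩ b`, then
`⊨ ⟨⌈P⌉⟩ while b do f ⟨◻(P ∧ ¬b)⟩`. -/
theorem invariant_rule_sound {St : Type*} (b : Set St) (f : St → Set St) (P : Set St)
    (hinv : ∀ σ ∈ P ∩ b, f σ ⊆ P) :
    ∀ S ∈ ceil P, kextP (whileSem b f) S ∈ boxA (P ∩ bᶜ) :=
  fun _ hS => kextP_subset _ fun _ hσ => whileSem_subset_of_invariant hinv (hS.2 hσ)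
end

section
/- Soundness of the loop-variant rule (nondeterministic instance): let b ⊆ Σ, f : Σ → Set Σ, and let (φ_n)_{n∈ℕ} be a family of outcome assertions (sets of subsets of Σ) such that every S ∈ φ₀ satisfies S ⊆ bᶜ, every S ∈ φ_{n+1} satisfies S ⊆ b, and for every n and every S ∈ φ_{n+1}, f†(S) ∈ φ_n. Then for every n and every S ∈ φ_n, wh†(S) ∈ φ₀, i.e. the triple ⟨∃n:ℕ. φ_n⟩ while b do f ⟨φ₀⟩ is valid. -/
open scoped Classical

/-! Unfolding the fixed point once shows that `while b do f` returns a state outside `b`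
unchanged and, inside `b`, runs `f` and then the loop again. Hence on `S ⊆ bᶜ` the loop acts as
the identity, and on `S ⊆ b` it satisfies `wh†(S) = wh†(f†(S))`; induction on `n` along the
variant carries `φ n` down to `φ 0`. -/

section Kleisli

variable {St : Type*}

theorem kextP_congr {g g' : St → Set St} {S : Set St} (h : ∀ σ ∈ S, g σ = g' σ) :
    kextP g S = kextP g' S :=
  Set.iUnion₂_congr h

theorem kextP_of_eq_singleton {g : St → Set St} {S : Set St} (h : ∀ σ ∈ S, g σ = {σ}) :
    kextP g S = S := by
  rw [kextP_congr h]
  exact Set.biUnion_of_singleton S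

theorem kextP_kextP (f g : St → Set St) (S : Set St) :
    kextP g (kextP f S) = kextP (fun σ => kextP g (f σ)) S := by
  simp only [kextP, Set.biUnion_iUnion]

end Kleisli

section WhileLoop

variable {St : Type*} (b : Set St) (f : St → Set St)

theorem whileSem_eq_PhiW : PhiW b f (whileSem b f) = whileSem b f :=
  OrderHom.map_lfp (⟨PhiW b f, PhiW_mono b f⟩ : (St → Set St) →o (St → Set St))

theorem whileSem_of_not_mem {σ : St} (hσ : σ ∉ b) : whileSem b f σ = {σ} := by
  rw [← congrFun (whileSem_eq_PhiW b f) σ, PhiW, if_neg hσ]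

theorem whileSem_of_mem {σ : St} (hσ : σ ∈ b) :
    whileSem b f σ = kextP (whileSem b f) (f σ) := by
  rw [← congrFun (whileSem_eq_PhiW b f) σ, PhiW, if_pos hσ, kextP]

theorem kextP_whileSem_of_subset_compl {S : Set St} (hS : S ⊆ bᶜ) :
    kextP (whileSem b f) S = S :=
  kextP_of_eq_singleton fun _ hσ => whileSem_of_not_mem b f (hS hσ)

theorem kextP_whileSem_of_subset {S : Set St} (hS : S ⊆ b) :
    kextP (whileSem b f) S = kextP (whileSem b f) (kextP f S) := by
  rw [kextP_kextP]
  exact kextP_congr fun _ hσ => whileSem_of_mem b f (hS hσ)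

end WhileLoop

/-- **Soundness of the loop-variant rule**: given a family `(φ n)` of outcome assertions
with `S ⊆ bᶜ` for `S ∈ φ 0`, `S ⊆ b` for `S ∈ φ (n+1)`, and `f†(S) ∈ φ n` for every
`S ∈ φ (n+1)`, the triple `⟨∃n. φ n⟩ while b do f ⟨φ 0⟩` is valid. -/
theorem variant_rule_sound {St : Type*} (b : Set St) (f : St → Set St)
    (φ : ℕ → Set (Set St))
    (h0 : ∀ S ∈ φ 0, S ⊆ bᶜ)
    (hS : ∀ n, ∀ S ∈ φ (n + 1), S ⊆ b)
    (hstep : ∀ n, ∀ S ∈ φ (n + 1), kextP f S ∈ φ n) :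
    ∀ n, ∀ S ∈ φ n, kextP (whileSem b f) S ∈ φ 0 := by
  intro n
  induction n with
  | zero =>
    intro S hS0
    rwa [kextP_whileSem_of_subset_compl b f (h0 S hS0)]
  | succ n ih =>
    intro S hSn
    rw [kextP_whileSem_of_subset b f (hS n S hSn)]
    exact ih _ (hstep n S hSn)
end

section
/- Continuity of infinite sums: let X be a complete lattice, let (f_i)_{i∈I} be a family of Scott-continuous functions f_i : X → U (i.e. f_i(⨆D) = ⨆_{x∈D} f_i(x) for every nonempty directed D ⊆ X), and let D ⊆ X be a nonempty directed set. Then ⨆_{x∈D} ∑_{i∈I} f_i(x) = ∑_{i∈I} f_i(⨆D). -/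
/-!
Addition on `U` is Scott-continuous in each argument separately, hence jointly, so finite sums of
Scott-continuous maps are Scott-continuous. The infinite sum is the pointwise supremum of its
finite partial sums, and a pointwise supremum of Scott-continuous maps between complete lattices
is Scott-continuous because suprema commute with suprema.
-/

open scoped Classical

universe u v

variable {U : Type u} [OLSemiring U]

namespace OLSemiring

theorem scottContinuous_add_const (y : U) : ScottContinuous fun x : U => x + y :=
  .of_map_sSup fun D hne hdir => (add_scott D hne hdir y).symm

theorem scottContinuous_const_add (y : U) : ScottContinuous fun x : U => y + x := by
  simpa only [add_comm y] using scottContinuous_add_const y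

theorem scottContinuous_add : ScottContinuous fun p : U × U => p.1 + p.2 :=
  .fromProd scottContinuous_const_add scottContinuous_add_const

end OLSemiring

section ScottContinuous

variable {X : Type*} [Preorder X]

theorem ScottContinuous.add {g h : X → U} (hg : ScottContinuous g) (hh : ScottContinuous h) :
    ScottContinuous fun x => g x + h x :=
  (hg.prodMk hh).comp OLSemiring.scottContinuous_add

theorem ScottContinuous.finset_sum {I : Type*} (J : Finset I) {g : I → X → U}
    (hg : ∀ i, ScottContinuous (g i)) : ScottContinuous fun x => ∑ i ∈ J, g i x := by
  induction J using Finset.induction_on with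
  | empty => exact ScottContinuous.const (0 : U)
  | insert a J ha ih => simpa only [Finset.sum_insert ha] using (hg a).add ih

end ScottContinuous

theorem ScottContinuous.iSup {X Y ι : Type*} [CompleteLattice X] [CompleteLattice Y]
    {g : ι → X → Y} (hg : ∀ j, ScottContinuous (g j)) :
    ScottContinuous fun x => ⨆ j, g j x :=
  .of_map_sSup fun D hne hdir => by
    simp only [fun j => (hg j).map_sSup hne hdir, sSup_image]
    exact iSup_comm.trans (iSup_congr fun _ => iSup_comm)

theorem ScottContinuous.wsum {X I : Type*} [CompleteLattice X] {g : I → X → U}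
    (hg : ∀ i, ScottContinuous (g i)) : ScottContinuous fun x => wsum fun i => g i x :=
  ScottContinuous.iSup fun J => ScottContinuous.finset_sum J hg

/-- **Continuity of infinite sums**: if every `f i : X → U` is Scott-continuous and
`D ⊆ X` is a nonempty directed set, then
`⨆_{x∈D} ∑_{i∈I} f i x = ∑_{i∈I} f i (⨆ D)`. -/
theorem wsum_scott_continuous {U : Type u} [OLSemiring U] {X : Type v}
    [CompleteLattice X] {I : Type w} (f : I → X → U)
    (hf : ∀ i (D : Set X), D.Nonempty → DirectedOn (· ≤ ·) D →
      sSup (f i '' D) = f i (sSup D))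
    (D : Set X) (hne : D.Nonempty) (hdir : DirectedOn (· ≤ ·) D) :
    sSup ((fun x => wsum (fun i => f i x)) '' D) = wsum (fun i => f i (sSup D)) := by
  have hcont : ∀ i, ScottContinuous (f i) := fun i =>
    .of_map_sSup fun D' hne' hdir' => (hf i D' hne' hdir').symm
  exact ((ScottContinuous.wsum hcont).map_sSup hne hdir).symm
end

section
/- Scott continuity of Kleisli extension: for all sets X, Y, every m ∈ W(X), and every nonempty directed family D of functions X → W(Y) (ordered pointwise) whose pointwise supremum f* — defined by f*(x)(y) = ⨆_{f∈D} f(x)(y) — has countable support at every x (so f* : X → W(Y)), one has ⨆_{f∈D} f†(m) = (f*)†(m), the supremum on the left taken pointwise in Y → U. -/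
open scoped Classical

universe u v

variable {U : Type u} [OLSemiring U]

/-
Kleisli extension is a supremum over finite subsets `J` of `supp m` of finite sums
`∑_{x∈J} m x * f x y`. Scott continuity of addition and of left multiplication lets the
directed supremum over `f ∈ D` pass through each such finite sum, and the two suprema
(over `J` and over `f`) commute.
-/

namespace OLSemiring

instance toCanonicallyOrderedAdd : CanonicallyOrderedAdd U where
  exists_add_of_le h := ((le_iff_exists_add _ _).1 h).imp fun _ hc => hc.symm
  le_self_add _ b := (le_iff_exists_add _ _).2 ⟨b, rfl⟩
  le_add_self _ b := (le_iff_exists_add _ _).2 ⟨b, add_comm _ _⟩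

instance toIsOrderedAddMonoid : IsOrderedAddMonoid U :=
  CanonicallyOrderedAdd.toIsOrderedAddMonoid

theorem iSup_add {ι : Sort*} [Nonempty ι] {a : ι → U} (ha : Directed (· ≤ ·) a) (y : U) :
    (⨆ i, a i) + y = ⨆ i, (a i + y) := by
  have h := add_scott (Set.range a) (Set.range_nonempty a) (directedOn_range.2 ha) y
  rwa [← Set.range_comp, sSup_range, sSup_range, eq_comm] at h

theorem mul_iSup {ι : Sort*} [Nonempty ι] {a : ι → U} (ha : Directed (· ≤ ·) a) (y : U) :
    y * ⨆ i, a i = ⨆ i, y * a i := by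
  have h := mul_scott_left (Set.range a) (Set.range_nonempty a) (directedOn_range.2 ha) y
  rwa [← Set.range_comp, sSup_range, sSup_range, eq_comm] at h

variable {ι : Type*} [Preorder ι] [IsDirectedOrder ι] [Nonempty ι]

theorem iSup_add_iSup_of_monotone_s14 {a b : ι → U} (ha : Monotone a) (hb : Monotone b) :
    (⨆ i, a i) + ⨆ i, b i = ⨆ i, (a i + b i) := by
  refine le_antisymm ?_ (iSup_le fun i => add_le_add (le_iSup a i) (le_iSup b i))
  rw [iSup_add ha.directed_le]
  refine iSup_le fun i => ?_
  rw [add_comm, iSup_add hb.directed_le]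
  refine iSup_le fun j => ?_
  obtain ⟨k, hik, hjk⟩ := exists_ge_ge i j
  calc b j + a i ≤ a k + b k := by rw [add_comm]; exact add_le_add (ha hik) (hb hjk)
    _ ≤ ⨆ i, (a i + b i) := le_iSup (fun i => a i + b i) k

theorem finsetSum_iSup_of_monotone {κ : Type*} (J : Finset κ) {a : κ → ι → U}
    (ha : ∀ k, Monotone (a k)) : ∑ k ∈ J, ⨆ i, a k i = ⨆ i, ∑ k ∈ J, a k i := by
  induction J using Finset.induction with
  | empty => simp only [Finset.sum_empty, ciSup_const]
  | insert k J hk ih =>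
    simp only [Finset.sum_insert hk, ih]
    exact iSup_add_iSup_of_monotone_s14 (ha k) fun _ _ hij => Finset.sum_le_sum fun k _ => ha k hij

end OLSemiring

open OLSemiring in
theorem kext_iSup_of_monotone {ι : Type*} [Preorder ι] [IsDirectedOrder ι] [Nonempty ι]
    {X Y : Type u} {F : ι → X → Y → U} (hF : Monotone F) (m : X → U) :
    kext (fun x y => ⨆ i, F i x y) m = fun y => ⨆ i, kext (F i) m y := by
  have hF' : ∀ x y, Monotone fun i => F i x y := fun x y _ _ hij => hF hij x y
  funext y
  calc kext (fun x y => ⨆ i, F i x y) m y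
      = ⨆ J : Finset (Function.support m), ⨆ i, ∑ x ∈ J, m x * F i x y := by
        refine iSup_congr fun J => ?_
        dsimp only
        rw [Finset.sum_congr rfl fun (x : Function.support m) _ =>
          mul_iSup (hF' x y).directed_le (m x)]
        exact finsetSum_iSup_of_monotone J fun x _ _ hij => mul_le_mul_right (hF' x y hij) (m x)
    _ = ⨆ i, kext (F i) m y := iSup_comm

theorem kext_scott_continuous_general {U : Type u} [OLSemiring U] {X Y : Type u}
    (m : X → U)
    (D : Set (X → Y → U)) (hne : D.Nonempty) (hdir : DirectedOn (· ≤ ·) D) :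
    (fun y => ⨆ f ∈ D, kext f m y) = kext (fun x y => ⨆ f ∈ D, f x y) m := by
  have := hne.to_subtype
  have := hdir.isDirectedOrder
  simp only [iSup_subtype']
  exact (kext_iSup_of_monotone (F := ((↑) : D → X → Y → U)) (fun _ _ h => h) m).symm

/-- **Scott continuity of Kleisli extension**: for `m ∈ W(X)` and a nonempty directed
family `D` of functions `X → W(Y)` (pointwise order) whose pointwise supremum `f*` has
countable support at every `x`, one has `⨆_{f∈D} f†(m) = (f*)†(m)` (pointwise). -/
theorem kext_scott_continuous {U : Type u} [OLSemiring U] {X Y : Type u}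
    (m : X → U) (hm : (Function.support m).Countable)
    (D : Set (X → Y → U)) (hne : D.Nonempty) (hdir : DirectedOn (· ≤ ·) D)
    (hD : ∀ f ∈ D, ∀ x, (Function.support (f x)).Countable)
    (hstar : ∀ x, (Function.support (fun y => ⨆ f ∈ D, f x y)).Countable) :
    (fun y => ⨆ f ∈ D, kext f m y) = kext (fun x y => ⨆ f ∈ D, f x y) m :=
  kext_scott_continuous_general m D hne hdir
end
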